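/- Every cone Banach space (X, ‖·‖_p) over (E, P), with P normal with normal constant M > 0, is of second category in itself with respect to the cone topology: X is not a countable union of nowhere dense subsets. -/
import Mathlib


open Set

section ConeDefs

variable {E : Type*} [NormedAddCommGroup E] [NormedSpace ℝ E]

/-- `a ≤ b` with respect to the cone `P`: `b - a ∈ P`. -/
def coneLE (P : Set E) (a b : E) : Prop := b - a ∈ P

/-- `a ≪ b` with respect to the cone `P`: `b - a ∈ interior P`. -/
def coneLT (P : Set E) (a b : E) : Prop := b - a ∈ interior P

/-- `P` is a cone in the real Banach space `E`. -/
def IsCone (P : Set E) : Prop :=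
  IsClosed P ∧ P.Nonempty ∧ P ≠ {0} ∧
    (∀ x ∈ P, ∀ y ∈ P, ∀ a b : ℝ, 0 ≤ a → 0 ≤ b → a • x + b • y ∈ P) ∧
    P ∩ (-P) = {0}

/-- `P` is a normal cone with normal constant `M`. -/
def IsNormalConst (P : Set E) (M : ℝ) : Prop :=
  0 < M ∧ ∀ a b : E, coneLE P 0 a → coneLE P a b → ‖a‖ ≤ M * ‖b‖

/-- `n : X → E` is a cone norm on `X` with respect to the cone `P ⊆ E`. -/
def IsConeNorm {X : Type*} [AddCommGroup X] [Module ℝ X] (P : Set E) (n : X → E) : Prop :=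
  (∀ x, coneLE P 0 (n x)) ∧ (∀ x, n x = 0 ↔ x = 0) ∧
    (∀ (α : ℝ) (x : X), n (α • x) = |α| • n x) ∧
    (∀ x y, coneLE P (n (x + y)) (n x + n y))

/-- Convergence of a sequence in a cone normed space. -/
def ConeConv {X : Type*} [AddCommGroup X] [Module ℝ X] (P : Set E) (n : X → E)
    (x : ℕ → X) (x₀ : X) : Prop :=
  ∀ c : E, coneLT P 0 c → ∃ N : ℕ, ∀ k ≥ N, coneLT P (n (x k - x₀)) c

/-- A sequence in a cone normed space is Cauchy. -/
def ConeCauchy {X : Type*} [AddCommGroup X] [Module ℝ X] (P : Set E) (n : X → E)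
    (x : ℕ → X) : Prop :=
  ∀ c : E, coneLT P 0 c → ∃ N : ℕ, ∀ k ≥ N, ∀ m ≥ N, coneLT P (n (x k - x m)) c

/-- A cone normed space is a cone Banach space if every Cauchy sequence converges. -/
def ConeComplete {X : Type*} [AddCommGroup X] [Module ℝ X] (P : Set E) (n : X → E) : Prop :=
  ∀ x : ℕ → X, ConeCauchy P n x → ∃ x₀ : X, ConeConv P n x x₀

/-- The ball `B_c(x) = {y : ‖x - y‖_p ≪ c}`. -/
def coneBall {X : Type*} [AddCommGroup X] [Module ℝ X] (P : Set E) (n : X → E)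
    (x : X) (c : E) : Set X :=
  {y | coneLT P (n (x - y)) c}

/-- The cone topology: generated by the sub-basis of all balls `B_c(x)`, `0 ≪ c`. -/
def coneTopology {X : Type*} [AddCommGroup X] [Module ℝ X] (P : Set E) (n : X → E) :
    TopologicalSpace X :=
  TopologicalSpace.generateFrom {s | ∃ x c, coneLT P 0 c ∧ s = coneBall P n x c}

/-- A subset `A ⊆ E` is upper bounded with respect to the cone `P`. -/
def ConeUpperBounded (P : Set E) (A : Set E) : Prop :=
  ∃ t : E, coneLE P 0 t ∧ ∀ a ∈ A, coneLE P a t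

/-- `P` has the supremum property: every upper bounded subset of `P`
has a least upper bound in `P` (least among the nonnegative upper bounds). -/
def SupremumProperty (P : Set E) : Prop :=
  ∀ A ⊆ P, ConeUpperBounded P A →
    ∃ s ∈ P, (∀ a ∈ A, coneLE P a s) ∧
      ∀ t : E, coneLE P 0 t → (∀ a ∈ A, coneLE P a t) → coneLE P s t

end ConeDefs

section Aux

variable {E : Type*} [NormedAddCommGroup E] [NormedSpace ℝ E]

lemma cone_add {P : Set E} (hP : IsCone P) {x y : E} (hx : x ∈ P) (hy : y ∈ P) :
    x + y ∈ P := by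
  obtain ⟨-, -, -, hadd, -⟩ := hP
  simpa using hadd x hx y hy 1 1 zero_le_one zero_le_one

lemma cone_smul {P : Set E} (hP : IsCone P) {a : ℝ} (ha : 0 ≤ a) {x : E} (hx : x ∈ P) :
    a • x ∈ P := by
  obtain ⟨-, -, -, hadd, -⟩ := hP
  simpa using hadd x hx x hx a 0 ha le_rfl

lemma int_add_mem {P : Set E} (hP : IsCone P) {u p : E} (hu : u ∈ interior P) (hp : p ∈ P) :
    u + p ∈ interior P := by
  rw [mem_interior] at hu ⊢
  obtain ⟨O, hOP, hO, huO⟩ := hu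
  refine ⟨(· - p) ⁻¹' O, fun z hz => ?_, hO.preimage (continuous_id.sub continuous_const), by
    simpa using huO⟩
  simpa using cone_add hP (hOP hz) hp

lemma int_smul {P : Set E} (hP : IsCone P) {t : ℝ} (ht : 0 < t) {u : E} (hu : u ∈ interior P) :
    t • u ∈ interior P := by
  have hmap : IsOpenMap fun z : E => t • z := isOpenMap_smul₀ ht.ne'
  have : t • u ∈ (fun z : E => t • z) '' interior P := ⟨u, hu, rfl⟩
  have hsub : (fun z : E => t • z) '' interior P ⊆ P := by
    rintro _ ⟨z, hz, rfl⟩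
    exact cone_smul hP ht.le (interior_subset hz)
  exact interior_maximal hsub (hmap _ isOpen_interior) this

lemma exists_delta {P : Set E} (e : E) {v : E} (hv : v ∈ interior P) :
    ∃ δ : ℝ, 0 < δ ∧ v - δ • e ∈ interior P := by
  have hc : Continuous fun δ : ℝ => v - δ • e := by continuity
  have hmem : (fun δ : ℝ => v - δ • e) ⁻¹' interior P ∈ nhds (0 : ℝ) :=
    hc.continuousAt.preimage_mem_nhds (isOpen_interior.mem_nhds (by simpa using hv))
  obtain ⟨ε, hε, hsub⟩ := Metric.mem_nhds_iff.mp hmem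
  refine ⟨ε / 2, by positivity, hsub ?_⟩
  show ε / 2 ∈ Metric.ball (0:ℝ) ε
  rw [Metric.mem_ball, Real.dist_eq, sub_zero, abs_of_pos (by positivity : (0:ℝ) < ε/2)]
  linarith

end Aux
section Aux2

variable {E : Type*} [NormedAddCommGroup E] [NormedSpace ℝ E]

lemma coneLE_coneLT_trans {P : Set E} (hP : IsCone P) {a b c : E}
    (h1 : coneLE P a b) (h2 : coneLT P b c) : coneLT P a c := by
  have : (c - b) + (b - a) ∈ interior P := int_add_mem hP h2 h1
  simpa [coneLT, sub_add_sub_cancel] using this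

lemma coneLT_coneLE_trans {P : Set E} (hP : IsCone P) {a b c : E}
    (h1 : coneLT P a b) (h2 : coneLE P b c) : coneLT P a c := by
  have : (b - a) + (c - b) ∈ interior P := int_add_mem hP h1 h2
  simpa [coneLT, add_sub_cancel, add_comm (b - a) (c - b), sub_add_sub_cancel] using this

lemma coneLE_trans {P : Set E} (hP : IsCone P) {a b c : E}
    (h1 : coneLE P a b) (h2 : coneLE P b c) : coneLE P a c := by
  have : (c - b) + (b - a) ∈ P := cone_add hP h2 h1
  simpa [coneLE, sub_add_sub_cancel] using this

lemma coneLE_add {P : Set E} (hP : IsCone P) {a b c d : E}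
    (h1 : coneLE P a b) (h2 : coneLE P c d) : coneLE P (a + c) (b + d) := by
  have : (b - a) + (d - c) ∈ P := cone_add hP h1 h2
  simpa [coneLE, add_sub_add_comm] using this

lemma coneLE_smul_e {P : Set E} (hP : IsCone P) {e : E} (he : e ∈ interior P)
    {s s' : ℝ} (h : s ≤ s') : coneLE P (s • e) (s' • e) := by
  have : (s' - s) • e ∈ P := cone_smul hP (by linarith) (interior_subset he)
  simpa [coneLE, sub_smul] using this

variable {X : Type*} [AddCommGroup X] [Module ℝ X]

lemma coneNorm_zero {P : Set E} (nX : X → E) (hnX : IsConeNorm P nX) : nX 0 = 0 :=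
  (hnX.2.1 0).mpr rfl

lemma coneNorm_symm {P : Set E} (nX : X → E) (hnX : IsConeNorm P nX) (x y : X) :
    nX (x - y) = nX (y - x) := by
  have := hnX.2.2.1 (-1) (y - x)
  simpa [neg_sub] using this

lemma coneNorm_triangle {P : Set E} (nX : X → E) (hnX : IsConeNorm P nX) (x y z : X) :
    coneLE P (nX (x - z)) (nX (x - y) + nX (y - z)) := by
  have := hnX.2.2.2 (x - y) (y - z)
  simpa [sub_add_sub_cancel] using this

end Aux2
section Aux3

variable {E : Type*} [NormedAddCommGroup E] [NormedSpace ℝ E]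
variable {X : Type*} [AddCommGroup X] [Module ℝ X]

lemma coneBall_open {P : Set E} (nX : X → E) (x : X) {c : E} (hc : coneLT P 0 c) :
    @IsOpen X (coneTopology P nX) (coneBall P nX x c) :=
  TopologicalSpace.GenerateOpen.basic _ ⟨x, c, hc, rfl⟩

lemma self_mem_coneBall {P : Set E} (nX : X → E) (hnX : IsConeNorm P nX) (x : X)
    {c : E} (hc : coneLT P 0 c) : x ∈ coneBall P nX x c := by
  simp only [coneBall, Set.mem_setOf_eq, sub_self, coneNorm_zero nX hnX]
  exact hc

lemma coneBall_mono {P : Set E} (hP : IsCone P) (nX : X → E) {e : E} (he : e ∈ interior P)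
    {s s' : ℝ} (h : s ≤ s') (x : X) :
    coneBall P nX x (s • e) ⊆ coneBall P nX x (s' • e) := fun z hz =>
  coneLT_coneLE_trans hP hz (coneLE_smul_e hP he h)

lemma smul_e_pos {P : Set E} (hP : IsCone P) {e : E} (he : e ∈ interior P)
    {t : ℝ} (ht : 0 < t) : coneLT P 0 (t • e) := by
  simpa [coneLT] using int_smul hP ht he

/-- Every open set in the cone topology contains a ball `B(x, t•e)` around each of
its points. -/
lemma exists_ball_subset {P : Set E} (hP : IsCone P) (nX : X → E) (hnX : IsConeNorm P nX)
    {e : E} (he : e ∈ interior P) {U : Set X}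
    (hU : @IsOpen X (coneTopology P nX) U) :
    ∀ x ∈ U, ∃ t : ℝ, 0 < t ∧ coneBall P nX x (t • e) ⊆ U := by
  change TopologicalSpace.GenerateOpen _ U at hU
  induction hU with
  | basic s hs =>
    obtain ⟨y, c, hc, rfl⟩ := hs
    intro x hx
    have hx' : coneLT P (nX (y - x)) c := hx
    obtain ⟨δ, hδ, hδmem⟩ := exists_delta e hx'
    refine ⟨δ, hδ, fun z hz => ?_⟩
    have hz' : coneLT P (nX (x - z)) (δ • e) := hz
    have htri : coneLE P (nX (y - z)) (nX (y - x) + nX (x - z)) :=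
      coneNorm_triangle nX hnX y x z
    show coneLT P (nX (y - z)) c
    have h1 : (c - nX (y - x) - δ • e) + (δ • e - nX (x - z)) ∈ interior P :=
      int_add_mem hP hδmem (interior_subset hz')
    have h2 : ((c - nX (y - x) - δ • e) + (δ • e - nX (x - z)))
        + (nX (y - x) + nX (x - z) - nX (y - z)) ∈ interior P :=
      int_add_mem hP h1 htri
    have heq : ((c - nX (y - x) - δ • e) + (δ • e - nX (x - z)))
        + (nX (y - x) + nX (x - z) - nX (y - z)) = c - nX (y - z) := by abel
    rw [heq] at h2
    exact h2
  | univ => exact fun x _ => ⟨1, one_pos, fun z _ => trivial⟩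
  | inter U V hU hV ihU ihV =>
    intro x hx
    obtain ⟨t1, ht1, hs1⟩ := ihU x hx.1
    obtain ⟨t2, ht2, hs2⟩ := ihV x hx.2
    refine ⟨min t1 t2, lt_min ht1 ht2, fun z hz => ?_⟩
    exact ⟨hs1 (coneBall_mono hP nX he (min_le_left _ _) x hz),
      hs2 (coneBall_mono hP nX he (min_le_right _ _) x hz)⟩
  | sUnion S hS ih =>
    intro x hx
    obtain ⟨s, hsS, hxs⟩ := hx
    obtain ⟨t, ht, hsub⟩ := ih s hsS x hxs
    exact ⟨t, ht, hsub.trans (Set.subset_sUnion_of_mem hsS)⟩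

end Aux3
section Aux4

variable {E : Type*} [NormedAddCommGroup E] [NormedSpace ℝ E]

lemma coneLE_smul_lt {P : Set E} (hP : IsCone P) {e : E} (he : e ∈ interior P)
    {a c : E} {s δ : ℝ} (hs : s < δ) (ha : coneLE P a (s • e))
    (hδ : c - δ • e ∈ interior P) : coneLT P a c := by
  have h1 : (c - δ • e) + (δ - s) • e ∈ interior P :=
    int_add_mem hP hδ (cone_smul hP (by linarith) (interior_subset he))
  have h2 : ((c - δ • e) + (δ - s) • e) + (s • e - a) ∈ interior P :=
    int_add_mem hP h1 ha
  have heq : ((c - δ • e) + (δ - s) • e) + (s • e - a) = c - a := by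
    rw [sub_smul]; abel
  rw [heq] at h2; exact h2

variable {X : Type*} [AddCommGroup X] [Module ℝ X]

lemma step_lemma {P : Set E} (hP : IsCone P) (nX : X → E) (hnX : IsConeNorm P nX)
    {e : E} (he : e ∈ interior P) {A : Set X}
    (hA : @IsNowhereDense X (coneTopology P nX) A) (x : X) {t : ℝ} (ht : 0 < t) :
    ∃ (x' : X) (t' : ℝ), 0 < t' ∧ t' ≤ t / 2 ∧ coneLT P (nX (x - x')) ((t / 2) • e) ∧
      ∀ y : X, coneLE P (nX (x' - y)) ((3 * t') • e) →
        y ∉ @closure X (coneTopology P nX) A := by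
  letI T := coneTopology P nX
  have hball : coneLT P 0 ((t / 2) • e) := smul_e_pos hP he (by linarith)
  have hopenB : @IsOpen X T (coneBall P nX x ((t / 2) • e)) := coneBall_open nX x hball
  have hclosed : @IsClosed X T (@closure X T A) := isClosed_closure
  obtain ⟨x', hx'B, hx'A⟩ : ∃ x', x' ∈ coneBall P nX x ((t / 2) • e) ∧
      x' ∉ @closure X T A := by
    by_contra h
    push_neg at h
    have hsub : coneBall P nX x ((t / 2) • e) ⊆ @closure X T A := h
    have hsub2 : coneBall P nX x ((t / 2) • e) ⊆ @interior X T (@closure X T A) :=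
      interior_maximal hsub hopenB
    rw [hA] at hsub2
    exact hsub2 (self_mem_coneBall nX hnX x hball)
  have hVopen : @IsOpen X T (coneBall P nX x ((t / 2) • e) ∩ (@closure X T A)ᶜ) :=
    hopenB.inter hclosed.isOpen_compl
  obtain ⟨s, hs, hsub⟩ := exists_ball_subset hP nX hnX he hVopen x' ⟨hx'B, hx'A⟩
  refine ⟨x', min (s / 4) (t / 2), by positivity, min_le_right _ _, hx'B, ?_⟩
  intro y hy hyA
  have hm : min (s / 4) (t / 2) ≤ s / 4 := min_le_left _ _
  have h3 : 3 * min (s / 4) (t / 2) < s := by linarith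
  have hball' : coneLT P (nX (x' - y)) (s • e) := by
    have h1 : (s - 3 * min (s / 4) (t / 2)) • e ∈ interior P :=
      int_smul hP (by linarith) he
    have h2 : (s - 3 * min (s / 4) (t / 2)) • e
        + ((3 * min (s / 4) (t / 2)) • e - nX (x' - y)) ∈ interior P :=
      int_add_mem hP h1 hy
    have heq : (s - 3 * min (s / 4) (t / 2)) • e
        + ((3 * min (s / 4) (t / 2)) • e - nX (x' - y)) = s • e - nX (x' - y) := by
      rw [sub_smul]; abel
    rw [heq] at h2; exact h2
  exact (hsub hball').2 hyA

end Aux4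
/-- every cone Banach space is of second category in itself:
it is not a countable union of nowhere dense subsets (cone topology). -/
theorem cone_banach_second_category
    {E : Type*} [NormedAddCommGroup E] [NormedSpace ℝ E] [CompleteSpace E]
    {X : Type*} [AddCommGroup X] [Module ℝ X]
    (P : Set E) (hP : IsCone P) (hint : (interior P).Nonempty)
    (M : ℝ) (hM : IsNormalConst P M)
    (nX : X → E) (hnX : IsConeNorm P nX) (hcomplete : ConeComplete P nX) :
    ¬ ∃ A : ℕ → Set X, (∀ k, @IsNowhereDense X (coneTopology P nX) (A k)) ∧
      (⋃ k, A k) = Set.univ := by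
  letI T := coneTopology P nX
  rintro ⟨A, hA, hcover⟩
  obtain ⟨e, he⟩ := hint
  have h0P : (0 : E) ∈ P := by
    simpa using cone_smul hP le_rfl (interior_subset he)
  have hstep : ∀ (k : ℕ) (x : X) (t : ℝ), 0 < t →
      ∃ (x' : X) (t' : ℝ), 0 < t' ∧ t' ≤ t / 2 ∧ coneLT P (nX (x - x')) ((t / 2) • e) ∧
        ∀ y : X, coneLE P (nX (x' - y)) ((3 * t') • e) → y ∉ @closure X T (A k) :=
    fun k x t ht => step_lemma hP nX hnX he (hA k) x ht
  choose f g hg1 hg2 hg3 hg4 using hstep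
  let F : ℕ → {p : X × ℝ // 0 < p.2} → {p : X × ℝ // 0 < p.2} := fun k p =>
    ⟨(f k p.1.1 p.1.2 p.2, g k p.1.1 p.1.2 p.2), hg1 k p.1.1 p.1.2 p.2⟩
  let seq : ℕ → {p : X × ℝ // 0 < p.2} := fun k => Nat.rec ⟨(0, 1), one_pos⟩ F k
  set x : ℕ → X := fun k => (seq k).1.1 with hxdef
  set t : ℕ → ℝ := fun k => (seq k).1.2 with htdef
  have htpos : ∀ k, 0 < t k := fun k => (seq k).2
  have hhalf : ∀ k, t (k + 1) ≤ t k / 2 := fun k => hg2 k (x k) (t k) (htpos k)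
  have hstep3 : ∀ k, coneLT P (nX (x k - x (k + 1))) ((t k / 2) • e) :=
    fun k => hg3 k (x k) (t k) (htpos k)
  have hstep4 : ∀ k, ∀ y : X, coneLE P (nX (x (k + 1) - y)) ((3 * t (k + 1)) • e) →
      y ∉ @closure X T (A k) := fun k => hg4 k (x k) (t k) (htpos k)
  -- t is antitone
  have hanti : ∀ k m, k ≤ m → t m ≤ t k := by
    intro k m hkm
    induction m, hkm using Nat.le_induction with
    | base => exact le_refl _
    | succ m hkm ih => exact le_trans (le_trans (hhalf m) (by linarith [htpos m])) ih
  -- geometric bound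
  have hgeo : ∀ k, t k ≤ (1 / 2 : ℝ) ^ k := by
    intro k
    induction k with
    | zero => simp [htdef, seq]
    | succ k ih =>
      have := hhalf k
      calc t (k + 1) ≤ t k / 2 := this
        _ ≤ (1 / 2 : ℝ) ^ k / 2 := by linarith
        _ = (1 / 2 : ℝ) ^ (k + 1) := by ring
  -- distance bound between terms
  have hbound : ∀ k m, k ≤ m → coneLE P (nX (x k - x m)) ((2 * t k - 2 * t m) • e) := by
    intro k m hkm
    induction m, hkm using Nat.le_induction with
    | base =>
      have : nX (x k - x k) = 0 := by
        simpa using coneNorm_zero nX hnX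
      rw [this]
      simpa [coneLE] using h0P
    | succ m hkm ih =>
      have htri : coneLE P (nX (x k - x (m + 1)))
          (nX (x k - x m) + nX (x m - x (m + 1))) := coneNorm_triangle nX hnX _ _ _
      have hsum : coneLE P (nX (x k - x m) + nX (x m - x (m + 1)))
          ((2 * t k - 2 * t m) • e + (t m / 2) • e) :=
        coneLE_add hP ih (interior_subset (hstep3 m))
      have heq : (2 * t k - 2 * t m) • e + (t m / 2) • e
          = (2 * t k - 2 * t m + t m / 2) • e := by rw [← add_smul]
      rw [heq] at hsum
      have hle : coneLE P ((2 * t k - 2 * t m + t m / 2) • e)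
          ((2 * t k - 2 * t (m + 1)) • e) :=
        coneLE_smul_e hP he (by linarith [hhalf m, htpos m])
      exact coneLE_trans hP (coneLE_trans hP htri hsum) hle
  -- Cauchy
  have hcauchy : ConeCauchy P nX x := by
    intro c hc
    have hc' : c ∈ interior P := by simpa [coneLT] using hc
    obtain ⟨δ, hδ, hδmem⟩ := exists_delta e hc'
    obtain ⟨N, hN⟩ := exists_pow_lt_of_lt_one (by positivity : (0:ℝ) < δ / 2)
      (by norm_num : (1 / 2 : ℝ) < 1)
    have hNt : 2 * t N < δ := by
      have := hgeo N
      linarith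
    refine ⟨N, fun k hk m hm => ?_⟩
    rcases le_total k m with hkm | hmk
    · refine coneLE_smul_lt hP he ?_ (hbound k m hkm) hδmem
      have h1 : t k ≤ t N := hanti N k hk
      have h2 := htpos m
      linarith
    · rw [coneNorm_symm nX hnX]
      refine coneLE_smul_lt hP he ?_ (hbound m k hmk) hδmem
      have h1 : t m ≤ t N := hanti N m hm
      have h2 := htpos k
      linarith
  obtain ⟨x₀, hconv⟩ := hcomplete x hcauchy
  have hx₀ : x₀ ∈ ⋃ k, A k := hcover ▸ Set.mem_univ x₀
  obtain ⟨k, hk⟩ := Set.mem_iUnion.mp hx₀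
  -- show x₀ is far from A k : contradiction
  obtain ⟨N, hN⟩ := hconv ((t (k + 1)) • e) (smul_e_pos hP he (htpos (k + 1)))
  set m := max N (k + 1) with hm
  have h1 : coneLE P (nX (x (k + 1) - x m)) ((2 * t (k + 1) - 2 * t m) • e) :=
    hbound (k + 1) m (le_max_right _ _)
  have h2 : coneLT P (nX (x m - x₀)) ((t (k + 1)) • e) := hN m (le_max_left _ _)
  have htri : coneLE P (nX (x (k + 1) - x₀)) (nX (x (k + 1) - x m) + nX (x m - x₀)) :=
    coneNorm_triangle nX hnX _ _ _
  have hsum : coneLE P (nX (x (k + 1) - x m) + nX (x m - x₀))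
      ((2 * t (k + 1) - 2 * t m) • e + (t (k + 1)) • e) :=
    coneLE_add hP h1 (interior_subset h2)
  have heq : (2 * t (k + 1) - 2 * t m) • e + (t (k + 1)) • e
      = (2 * t (k + 1) - 2 * t m + t (k + 1)) • e := by rw [← add_smul]
  rw [heq] at hsum
  have hle : coneLE P ((2 * t (k + 1) - 2 * t m + t (k + 1)) • e) ((3 * t (k + 1)) • e) :=
    coneLE_smul_e hP he (by linarith [htpos m])
  have hfinal : coneLE P (nX (x (k + 1) - x₀)) ((3 * t (k + 1)) • e) :=
    coneLE_trans hP (coneLE_trans hP htri hsum) hle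
  exact hstep4 k x₀ hfinal (subset_closure hk)
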